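/- arXiv:1104.5625 — 3 statements merged into one kernel-verified Lean document; each statement's English description precedes it below -/
import Mathlib

section
/- Let $w:[0,\infty)\to\mathbb{R}$ be continuously differentiable with $w(0)=0$, $w(r)>0$ for all $r>0$, and with $w'$ non-decreasing on $[0,\infty)$. Then for every integer $m \geq 1$ and every $r>0$: $w(r)^m \leq m\, w'(r) \int_0^r w(s)^{m-1}\,ds$. In particular, if moreover $w'>0$, then $q_w(r)\,\eta_w(r) \geq 1/m$ for all $r>0$. -/
/-! Since `(w ^ m)' = m w^(m-1) w'` and `w'` is non-decreasing, on `[0, r]` we have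
`(w ^ m)' ≤ m w'(r) w^(m-1)` as soon as `w ≥ 0` there; integrating from `0`, where `w` vanishes,
gives `w(r)^m ≤ m w'(r) ∫_0^r w^(m-1)`, and dividing by `m w(r)^m` gives the quotient form. -/

open Set intervalIntegral

theorem pow_sub_pow_le_mul_deriv_mul_integral {w : ℝ → ℝ} {a b : ℝ} (hab : a ≤ b)
    (hw : Differentiable ℝ w) (hnn : ∀ s ∈ Icc a b, 0 ≤ w s)
    (hmono : MonotoneOn (deriv w) (Icc a b)) (m : ℕ) :
    w b ^ m - w a ^ m ≤ m * deriv w b * ∫ s in a..b, w s ^ (m - 1) := by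
  have hpow : Continuous fun s => w s ^ (m - 1) := hw.continuous.pow _
  have hderiv : IntervalIntegrable (deriv w) MeasureTheory.volume a b :=
    MonotoneOn.intervalIntegrable (by rwa [uIcc_of_le hab])
  calc w b ^ m - w a ^ m = ∫ s in a..b, m * w s ^ (m - 1) * deriv w s :=
        (integral_eq_sub_of_hasDerivAt (fun s _ => (hw s).hasDerivAt.pow m)
          (hderiv.continuousOn_mul (continuous_const.mul hpow).continuousOn)).symm
    _ ≤ ∫ s in a..b, m * deriv w b * w s ^ (m - 1) := by
        refine integral_mono_on hab
          (hderiv.continuousOn_mul (continuous_const.mul hpow).continuousOn)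
          ((continuous_const.mul hpow).intervalIntegrable a b) fun s hs => ?_
        have hslope : deriv w s ≤ deriv w b := hmono hs ⟨hab, le_rfl⟩ hs.2
        have hweight : 0 ≤ (m : ℝ) * w s ^ (m - 1) := by
          have := hnn s hs
          positivity
        nlinarith
    _ = m * deriv w b * ∫ s in a..b, w s ^ (m - 1) := integral_const_mul _ _

theorem one_div_le_div_pow_mul_div_of_pow_le {x d I : ℝ} {m : ℕ} (hx : 0 < x) (hm : 1 ≤ m)
    (h : x ^ m ≤ m * d * I) : 1 / (m : ℝ) ≤ I / x ^ (m - 1) * (d / x) := by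
  have hm' : (0 : ℝ) < m := by exact_mod_cast hm
  have hxm : x ^ (m - 1) * x = x ^ m := by rw [← pow_succ, Nat.sub_add_cancel hm]
  rw [div_mul_div_comm, hxm, div_le_div_iff₀ hm' (pow_pos hx m)]
  linarith

/-- Let `w : [0,∞) → ℝ` be continuously differentiable with `w 0 = 0`, `w r > 0` for
`r > 0`, and `w'` non-decreasing on `[0,∞)`. Then for every integer `m ≥ 1` and every
`r > 0`: `w(r)^m ≤ m w'(r) ∫_0^r w(s)^(m-1) ds`. In particular, if moreover `w' > 0`,
then `q_w(r) η_w(r) ≥ 1/m` for all `r > 0`. -/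
theorem convex_warping_balanced_from_below (w : ℝ → ℝ)
    (hw : ContDiff ℝ 1 w) (h0 : w 0 = 0) (hpos : ∀ r > (0:ℝ), 0 < w r)
    (hmono : MonotoneOn (deriv w) (Set.Ici (0:ℝ))) :
    ∀ m : ℕ, 1 ≤ m → ∀ r > (0:ℝ),
      (w r ^ m ≤ (m : ℝ) * deriv w r * ∫ s in (0:ℝ)..r, w s ^ (m - 1)) ∧
      ((∀ t : ℝ, 0 ≤ t → 0 < deriv w t) →
        ((∫ s in (0:ℝ)..r, w s ^ (m - 1)) / w r ^ (m - 1)) * (deriv w r / w r)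
          ≥ 1 / m) := by
  intro m hm r hr
  have hnn : ∀ s ∈ Icc 0 r, 0 ≤ w s := fun s hs =>
    hs.1.eq_or_lt.elim (fun h => h ▸ h0.ge) fun h => (hpos s h).le
  have key : w r ^ m ≤ m * deriv w r * ∫ s in (0:ℝ)..r, w s ^ (m - 1) := by
    simpa [h0, zero_pow (Nat.one_le_iff_ne_zero.mp hm)] using
      pow_sub_pow_le_mul_deriv_mul_integral hr.le (hw.differentiable one_ne_zero) hnn
        (hmono.mono Icc_subset_Ici_self) m
  exact ⟨key, fun _ => one_div_le_div_pow_mul_div_of_pow_le (hpos r hr) hm key⟩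
end

section
/- Let $b<0$, let $m \geq 2$ be an integer, let $C \geq \sqrt{-b}$, and set $w_b(r)=\frac{1}{\sqrt{-b}}\sinh(\sqrt{-b}\,r)$ and $W(r)=w_b(r)\,e^{-\frac{m}{m-1}Cr}$. Then there exists $r>0$ such that $q_W(r)\big(\eta_{w_b}(r)-C\big) < \frac{1}{m}$, where $q_W(r)=\frac{\int_0^r W(s)^{m-1}ds}{W(r)^{m-1}}$ and $\eta_{w_b}=w_b'/w_b$. That is, the isoperimetric comparison space determined by $w_b$ and the constant bounding function $h\equiv C$ is not $w_b$-balanced from below. -/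
/-!
With `a = √(-b)` and `t = e^{-ar}` one has `η_{w_b}(r) - a = 2at²/(1 - t²)`, which tends to `0` as
`r → ∞`. If `C > a`, then `η_{w_b} - C` is eventually negative while `q_W ≥ 0`. If `C = a`, then
`(m - 1) · m/(m - 1) = m` gives `W(s)^{m-1} = (1 - e^{-2as})^{m-1} e^{-as} / (2a)^{m-1}`, so
`∫_0^r W^{m-1} ≤ 1/(a (2a)^{m-1})` and `q_W(r) (η_{w_b}(r) - a) ≤ 2t/(1 - t²)^m`, which tends
to `0`.
-/

open Real Filter Topology

noncomputable section

/-- `w_b` for `b = -a²`. -/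
def sinhWarp (a r : ℝ) : ℝ := sinh (a * r) / a

/-- The warping function `W` of `M^m_W` for `w = w_b` and `h ≡ C`. -/
def comparisonWarp (a : ℝ) (m : ℕ) (C r : ℝ) : ℝ :=
  sinhWarp a r * exp (-(((m : ℝ) / ((m : ℝ) - 1)) * C) * r)

/-- `q_W` with `n = m - 1`. -/
def volumeQuotient (W : ℝ → ℝ) (n : ℕ) (r : ℝ) : ℝ :=
  (∫ s in (0 : ℝ)..r, W s ^ n) / W r ^ n

end

theorem sinh_eq_exp_neg (x : ℝ) : sinh x = (1 - exp (-x) ^ 2) / (2 * exp (-x)) := by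
  rw [sinh_eq, exp_neg]
  field_simp

theorem cosh_eq_exp_neg (x : ℝ) : cosh x = (1 + exp (-x) ^ 2) / (2 * exp (-x)) := by
  rw [cosh_eq, exp_neg]
  field_simp

theorem integral_exp_neg_mul {a : ℝ} (ha : a ≠ 0) (r : ℝ) :
    ∫ s in (0 : ℝ)..r, exp (-(a * s)) = (1 - exp (-(a * r))) / a := by
  simp_rw [← neg_mul]
  rw [intervalIntegral.integral_comp_mul_left exp (neg_ne_zero.2 ha), integral_exp]
  simp only [mul_zero, exp_zero, smul_eq_mul, neg_mul]
  field_simp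
  ring

theorem exists_pos_comp_exp_neg_lt {a c : ℝ} (ha : 0 < a) {g : ℝ → ℝ} (hg : ContinuousAt g 0)
    (hc : g 0 < c) : ∃ r > 0, g (exp (-(a * r))) < c := by
  have hexp : Tendsto (fun r => exp (-(a * r))) atTop (𝓝 0) :=
    tendsto_exp_neg_atTop_nhds_zero.comp (tendsto_id.const_mul_atTop ha)
  obtain ⟨r, hgr, hr⟩ :=
    (((hg.tendsto.comp hexp).eventually (gt_mem_nhds hc)).and (eventually_gt_atTop 0)).exists
  exact ⟨r, hr, hgr⟩

theorem volumeQuotient_nonneg {W : ℝ → ℝ} {n : ℕ} {r : ℝ} (hr : 0 ≤ r)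
    (hW : ∀ s ∈ Set.Icc 0 r, 0 ≤ W s) : 0 ≤ volumeQuotient W n r :=
  div_nonneg (intervalIntegral.integral_nonneg hr fun s hs => pow_nonneg (hW s hs) n)
    (pow_nonneg (hW r ⟨hr, le_rfl⟩) n)

theorem hasDerivAt_sinhWarp {a : ℝ} (ha : a ≠ 0) (r : ℝ) :
    HasDerivAt (sinhWarp a) (cosh (a * r)) r := by
  have h := ((hasDerivAt_id r).const_mul a).sinh.div_const a
  simp only [id, mul_one, mul_div_cancel_right₀ _ ha] at h
  exact h

theorem sinhWarp_nonneg {a r : ℝ} (ha : 0 < a) (hr : 0 ≤ r) : 0 ≤ sinhWarp a r :=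
  div_nonneg (sinh_nonneg_iff.2 (by positivity)) ha.le

theorem deriv_sinhWarp_div_sub {a r : ℝ} (ha : 0 < a) (hr : 0 < r) :
    deriv (sinhWarp a) r / sinhWarp a r - a =
      2 * a * exp (-(a * r)) ^ 2 / (1 - exp (-(a * r)) ^ 2) := by
  have ht : exp (-(a * r)) < 1 := exp_lt_one_iff.2 (neg_lt_zero.2 (by positivity))
  have ht' : 0 < 1 - exp (-(a * r)) ^ 2 := by nlinarith [exp_pos (-(a * r))]
  rw [(hasDerivAt_sinhWarp ha.ne' r).deriv, sinhWarp, sinh_eq_exp_neg, cosh_eq_exp_neg]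
  field_simp
  ring

theorem comparisonWarp_nonneg {a s : ℝ} (ha : 0 < a) (hs : 0 ≤ s) (m : ℕ) (C : ℝ) :
    0 ≤ comparisonWarp a m C s :=
  mul_nonneg (sinhWarp_nonneg ha hs) (exp_pos _).le

theorem continuous_comparisonWarp (a : ℝ) (m : ℕ) (C : ℝ) : Continuous (comparisonWarp a m C) := by
  unfold comparisonWarp sinhWarp
  fun_prop

theorem comparisonWarp_self_pow {a : ℝ} (ha : a ≠ 0) {m : ℕ} (hm : 1 < m) (s : ℝ) :
    comparisonWarp a m a s ^ (m - 1) =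
      (1 - exp (-(a * s)) ^ 2) ^ (m - 1) * exp (-(a * s)) / (2 * a) ^ (m - 1) := by
  have hm' : (m : ℝ) - 1 ≠ 0 := sub_ne_zero.2 (by exact_mod_cast hm.ne')
  have hexp : exp (-(((m : ℝ) / ((m : ℝ) - 1)) * a) * s) ^ (m - 1) = exp (-(a * s)) ^ m := by
    rw [← exp_nat_mul, ← exp_nat_mul, Nat.cast_sub hm.le]
    congr 1
    field_simp
    ring
  have ht : exp (-(a * s)) ≠ 0 := (exp_pos _).ne'
  obtain ⟨n, rfl⟩ : ∃ n, m = n + 1 := ⟨m - 1, by omega⟩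
  rw [comparisonWarp, sinhWarp, mul_pow, hexp, sinh_eq_exp_neg, Nat.add_sub_cancel, div_div,
    div_pow, mul_pow, mul_pow]
  field_simp
  ring

theorem integral_comparisonWarp_self_pow_le {a r : ℝ} (ha : 0 < a) {m : ℕ} (hm : 1 < m)
    (hr : 0 ≤ r) :
    ∫ s in (0 : ℝ)..r, comparisonWarp a m a s ^ (m - 1) ≤ 1 / (a * (2 * a) ^ (m - 1)) := by
  have hbound : ∀ s ∈ Set.Icc 0 r,
      comparisonWarp a m a s ^ (m - 1) ≤ exp (-(a * s)) / (2 * a) ^ (m - 1) := by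
    intro s hs
    have ht : exp (-(a * s)) ≤ 1 := exp_le_one_iff.2 (by nlinarith [hs.1])
    rw [comparisonWarp_self_pow ha.ne' hm]
    gcongr
    exact mul_le_of_le_one_left (exp_pos _).le
      (pow_le_one₀ (by nlinarith [exp_pos (-(a * s))]) (by nlinarith [exp_pos (-(a * s))]))
  calc ∫ s in (0 : ℝ)..r, comparisonWarp a m a s ^ (m - 1)
      ≤ ∫ s in (0 : ℝ)..r, exp (-(a * s)) / (2 * a) ^ (m - 1) :=
        intervalIntegral.integral_mono_on hr
          (((continuous_comparisonWarp a m a).pow _).intervalIntegrable _ _)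
          ((by fun_prop : Continuous fun s => exp (-(a * s)) / (2 * a) ^ (m - 1)).intervalIntegrable
            _ _)
          hbound
    _ = (1 - exp (-(a * r))) / (a * (2 * a) ^ (m - 1)) := by
        rw [intervalIntegral.integral_div, integral_exp_neg_mul ha.ne', div_div]
    _ ≤ 1 / (a * (2 * a) ^ (m - 1)) := by
        gcongr
        linarith [exp_pos (-(a * r))]

theorem volumeQuotient_mul_deriv_sinhWarp_div_sub_le {a r : ℝ} (ha : 0 < a) {m : ℕ} (hm : 1 < m)
    (hr : 0 < r) :
    volumeQuotient (comparisonWarp a m a) (m - 1) r * (deriv (sinhWarp a) r / sinhWarp a r - a)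
      ≤ 2 * exp (-(a * r)) / (1 - exp (-(a * r)) ^ 2) ^ m := by
  rw [volumeQuotient, deriv_sinhWarp_div_sub ha hr, comparisonWarp_self_pow ha.ne' hm]
  set t := exp (-(a * r))
  have ht : 0 < t := exp_pos _
  have ht' : 0 < 1 - t ^ 2 := by
    have : t < 1 := exp_lt_one_iff.2 (neg_lt_zero.2 (by positivity))
    nlinarith
  obtain ⟨n, rfl⟩ : ∃ n, m = n + 1 := ⟨m - 1, by omega⟩
  calc _ ≤ 1 / (a * (2 * a) ^ (n + 1 - 1)) / ((1 - t ^ 2) ^ (n + 1 - 1) * t / (2 * a) ^ (n + 1 - 1))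
          * (2 * a * t ^ 2 / (1 - t ^ 2)) := by
        gcongr
        exact integral_comparisonWarp_self_pow_le ha hm hr.le
    _ = 2 * t / (1 - t ^ 2) ^ (n + 1) := by
        rw [Nat.add_sub_cancel]
        field_simp
        ring

/-- Let `b < 0`, `m ≥ 2` an integer, `C ≥ √(-b)`, `w_b r = sinh(√(-b) r)/√(-b)` and
`W r = w_b r · e^(-(m/(m-1)) C r)`. Then there exists `r > 0` with
`q_W(r) (η_{w_b}(r) - C) < 1/m`, where `q_W(r) = (∫_0^r W(s)^(m-1) ds)/W(r)^(m-1)` and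
`η_{w_b} = w_b'/w_b`. That is, the isoperimetric comparison space determined by `w_b` and
the constant bounding function `h ≡ C` is not `w_b`-balanced from below. -/
theorem isoperimetric_space_not_balanced_from_below (b : ℝ) (hb : b < 0) (m : ℕ)
    (hm : 2 ≤ m) (C : ℝ) (hC : Real.sqrt (-b) ≤ C) (w W : ℝ → ℝ)
    (hw : w = fun r => Real.sinh (Real.sqrt (-b) * r) / Real.sqrt (-b))
    (hW : W = fun r => w r * Real.exp (-(((m : ℝ) / ((m : ℝ) - 1)) * C) * r)) :
    ∃ r > (0:ℝ),
      ((∫ s in (0:ℝ)..r, W s ^ (m - 1)) / W r ^ (m - 1)) * (deriv w r / w r - C)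
        < 1 / m := by
  subst hw hW
  set a := √(-b)
  have ha : 0 < a := sqrt_pos.2 (neg_pos.2 hb)
  show ∃ r > 0, volumeQuotient (comparisonWarp a m C) (m - 1) r *
    (deriv (sinhWarp a) r / sinhWarp a r - C) < 1 / m
  rcases hC.lt_or_eq with hlt | rfl
  · obtain ⟨r, hr, hη⟩ := exists_pos_comp_exp_neg_lt ha (g := fun t => 2 * a * t ^ 2 / (1 - t ^ 2))
      (ContinuousAt.div (by fun_prop) (by fun_prop) (by norm_num)) (c := C - a)
      (by simpa using hlt)
    have hη' : deriv (sinhWarp a) r / sinhWarp a r - C < 0 := by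
      linarith [deriv_sinhWarp_div_sub ha hr]
    refine ⟨r, hr, (mul_nonpos_of_nonneg_of_nonpos ?_ hη'.le).trans_lt (by positivity)⟩
    exact volumeQuotient_nonneg hr.le fun s hs => comparisonWarp_nonneg ha hs.1 m C
  · obtain ⟨r, hr, hlt⟩ := exists_pos_comp_exp_neg_lt ha (g := fun t => 2 * t / (1 - t ^ 2) ^ m)
      (ContinuousAt.div (by fun_prop) (by fun_prop) (by norm_num)) (c := 1 / m)
      (by simp only [mul_zero, zero_div]; positivity)
    exact ⟨r, hr, (volumeQuotient_mul_deriv_sinhWarp_div_sub_le ha hm hr).trans_lt hlt⟩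
end

section
/- Let $A, B : (0,\infty) \to (0,\infty)$ be differentiable functions such that $\frac{A'(t)}{A(t)} \geq \frac{B'(t)}{B(t)}$ for all $t>0$, such that $\sup_{t>0} \frac{A(t)}{B(t)} < \infty$, and such that $\lim_{t\to\infty} \frac{B'(t)}{B(t)} = L$ exists. Then there exists a strictly increasing sequence $(t_i)$ with $t_i \to \infty$ and $\lim_{i\to\infty} \frac{A'(t_i)}{A(t_i)} = L$; in particular $\liminf_{t\to\infty} \frac{A'(t)}{A(t)} \leq L$. -/
/-!
Put `f = A'/A - B'/B ≥ 0`: it is the derivative of `log (A/B)`, which is bounded above. If `f`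
stayed above some `ε > 0` for all large `t`, then `log (A/B)` would grow at least like `ε t`;
hence `0` is a cluster value of `f` at infinity. Along a sequence `tᵢ → ∞` realising it,
`A'/A = f + B'/B` tends to `L`.
-/

open Filter Topology Set

theorem MapClusterPt.exists_strictMono_seq {α β : Type*} [LinearOrder α] [NoMaxOrder α]
    [(atTop : Filter α).IsCountablyGenerated] [TopologicalSpace β] [FirstCountableTopology β]
    {u : α → β} {y : β} (h : MapClusterPt y atTop u) (a : α) :
    ∃ t : ℕ → α, StrictMono t ∧ (∀ n, a < t n) ∧ Tendsto t atTop atTop ∧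
      Tendsto (u ∘ t) atTop (𝓝 y) := by
  obtain ⟨θ, hθ, huθ⟩ := exists_seq_comp_tendsto h
  obtain ⟨φ, hφ, hrecord⟩ := extraction_of_frequently_atTop
    ((frequently_high_scores hθ).and_eventually (hθ.eventually_gt_atTop a))
  have hmono : StrictMono (θ ∘ φ) := fun m n hmn => (hrecord n).1 _ (hφ hmn)
  exact ⟨θ ∘ φ, hmono, fun n => (hrecord n).2, hθ.comp hφ.tendsto_atTop,
    huθ.comp hφ.tendsto_atTop⟩

theorem frequently_lt_of_hasDerivAt_of_isBoundedUnder {g g' : ℝ → ℝ}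
    (hg : ∀ᶠ t in atTop, HasDerivAt g (g' t) t) (hbdd : IsBoundedUnder (· ≤ ·) atTop g)
    {ε : ℝ} (hε : 0 < ε) : ∃ᶠ t in atTop, g' t < ε := by
  by_contra hfreq
  simp only [not_frequently, not_lt] at hfreq
  obtain ⟨S, hS⟩ := eventually_atTop.1 (hg.and hfreq)
  have hgrowth : ∀ t ≥ S, ε * (t - S) ≤ g t - g S := by
    intro t ht
    refine (convex_Ici S).mul_sub_le_image_sub_of_le_deriv ?_ ?_ ?_ S self_mem_Ici t ht ht
    · exact fun x hx => (hS x hx).1.continuousAt.continuousWithinAt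
    · exact fun x hx => (hS x (interior_subset hx)).1.differentiableAt.differentiableWithinAt
    · intro x hx
      rw [(hS x (interior_subset hx)).1.deriv]
      exact (hS x (interior_subset hx)).2
  have hlinear : Tendsto (fun t => ε * (t - S) + g S) atTop atTop :=
    tendsto_atTop_add_const_right _ _
      ((tendsto_atTop_add_const_right _ _ tendsto_id).const_mul_atTop hε)
  refine not_isBoundedUnder_of_tendsto_atTop (tendsto_atTop_mono' _ ?_ hlinear) hbdd
  filter_upwards [eventually_ge_atTop S] with t ht
  linarith [hgrowth t ht]

theorem mapClusterPt_zero_of_hasDerivAt_of_isBoundedUnder {g g' : ℝ → ℝ}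
    (hg : ∀ᶠ t in atTop, HasDerivAt g (g' t) t) (hg' : ∀ᶠ t in atTop, 0 ≤ g' t)
    (hbdd : IsBoundedUnder (· ≤ ·) atTop g) : MapClusterPt 0 atTop g' := by
  refine Metric.nhds_basis_ball.mapClusterPt_iff_frequently.2 fun ε hε => ?_
  refine ((frequently_lt_of_hasDerivAt_of_isBoundedUnder hg hbdd hε).and_eventually hg').mono ?_
  rintro t ⟨hlt, hnonneg⟩
  rw [Metric.mem_ball, Real.dist_0_eq_abs, abs_lt]
  exact ⟨by linarith, hlt⟩

/-- Let `A, B : (0,∞) → (0,∞)` be differentiable with `A'/A ≥ B'/B` on `(0,∞)`,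
`sup_{t>0} A(t)/B(t) < ∞`, and `B'(t)/B(t) → L` as `t → ∞`. Then there is a strictly
increasing sequence `(tᵢ)` of positive reals with `tᵢ → ∞` and `A'(tᵢ)/A(tᵢ) → L`;
in particular `liminf_{t→∞} A'(t)/A(t) ≤ L`. -/
theorem exists_seq_log_deriv_tendsto (A B : ℝ → ℝ) (L : ℝ)
    (hApos : ∀ t > (0:ℝ), 0 < A t) (hBpos : ∀ t > (0:ℝ), 0 < B t)
    (hAdiff : ∀ t > (0:ℝ), DifferentiableAt ℝ A t)
    (hBdiff : ∀ t > (0:ℝ), DifferentiableAt ℝ B t)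
    (hineq : ∀ t > (0:ℝ), deriv B t / B t ≤ deriv A t / A t)
    (hbdd : ∃ M : ℝ, ∀ t > (0:ℝ), A t / B t ≤ M)
    (hlim : Filter.Tendsto (fun t => deriv B t / B t) Filter.atTop (nhds L)) :
    (∃ t : ℕ → ℝ, StrictMono t ∧ (∀ i, 0 < t i) ∧
      Filter.Tendsto t Filter.atTop Filter.atTop ∧
      Filter.Tendsto (fun i => deriv A (t i) / A (t i)) Filter.atTop (nhds L)) ∧
    Filter.liminf (fun t => deriv A t / A t) Filter.atTop ≤ L := by
  obtain ⟨M, hM⟩ := hbdd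
  have hderiv : ∀ᶠ t in atTop, HasDerivAt (fun s => Real.log (A s) - Real.log (B s))
      (deriv A t / A t - deriv B t / B t) t := by
    filter_upwards [eventually_gt_atTop 0] with t ht
    exact ((hAdiff t ht).hasDerivAt.log (hApos t ht).ne').sub
      ((hBdiff t ht).hasDerivAt.log (hBpos t ht).ne')
  have hgap_nonneg : ∀ᶠ t in atTop, 0 ≤ deriv A t / A t - deriv B t / B t := by
    filter_upwards [eventually_gt_atTop 0] with t ht using sub_nonneg.2 (hineq t ht)
  have hlog_bdd : IsBoundedUnder (· ≤ ·) atTop (fun s => Real.log (A s) - Real.log (B s)) := by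
    refine isBoundedUnder_of_eventually_le (a := Real.log M) ?_
    filter_upwards [eventually_gt_atTop 0] with t ht
    rw [← Real.log_div (hApos t ht).ne' (hBpos t ht).ne']
    exact Real.log_le_log (div_pos (hApos t ht) (hBpos t ht)) (hM t ht)
  obtain ⟨t, hmono, hpos, htop, hgap⟩ :=
    (mapClusterPt_zero_of_hasDerivAt_of_isBoundedUnder hderiv hgap_nonneg
      hlog_bdd).exists_strictMono_seq 0
  have hA : Tendsto (fun i => deriv A (t i) / A (t i)) atTop (𝓝 L) := by
    simpa using hgap.add (hlim.comp htop)
  have hA_below : IsBoundedUnder (· ≥ ·) atTop (fun s => deriv A s / A s) := by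
    refine hlim.isBoundedUnder_ge.mono_ge ?_
    filter_upwards [eventually_gt_atTop 0] with s hs using hineq s hs
  exact ⟨⟨t, hmono, hpos, htop, hA⟩, (hA.mapClusterPt.of_comp htop).liminf_le hA_below⟩
end
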